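/- arXiv:math/0010126 — 5 statements merged into one kernel-verified Lean document; each statement's English description precedes it below -/
import Mathlib

section
/- In the free graded-commutative ℚ-algebra on generators x1, x2 (even degrees, cocycles) and y1, y2, y3 (odd degrees) with derivation d of degree +1 satisfying d(x1) = d(x2) = 0, d(y1) = x1^3·x2, d(y2) = x1^2·x2^2, d(y3) = x1·x2^3, the element (y1·x2 − x1·y2)·(y2·x2 − x1·y3) + x1^11 + x2^9 is a cocycle, i.e., d applied to it is zero. -/
/-! Both factors of the product are cocycles, since `d y₁ · x₂ = x₁⁴ x₂² = x₁ · d y₂` and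
`d y₂ · x₂ = x₁² x₂³ = x₁ · d y₃`; products of cocycles, and in particular powers of `x₁` and `x₂`,
are cocycles by the Leibniz rule. -/

namespace GradedDerivation

variable {A : Type*} [Ring A] [Algebra ℚ A] {𝒜 : ℕ → Submodule ℚ A} {d : A →ₗ[ℚ] A}

def IsLeibniz (𝒜 : ℕ → Submodule ℚ A) (d : A →ₗ[ℚ] A) : Prop :=
  ∀ m : ℕ, ∀ a ∈ 𝒜 m, ∀ b : A, d (a * b) = d a * b + ((-1 : ℚ) ^ m) • (a * d b)

theorem map_mul_of_map_eq_zero (hd : IsLeibniz 𝒜 d) {m : ℕ} {a : A} (ha : a ∈ 𝒜 m)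
    (hda : d a = 0) (b : A) : d (a * b) = ((-1 : ℚ) ^ m) • (a * d b) := by
  rw [hd m a ha, hda, zero_mul, zero_add]

theorem map_mul_eq_zero (hd : IsLeibniz 𝒜 d) {m : ℕ} {a b : A} (ha : a ∈ 𝒜 m)
    (hda : d a = 0) (hdb : d b = 0) : d (a * b) = 0 := by
  rw [map_mul_of_map_eq_zero hd ha hda, hdb, mul_zero, smul_zero]

theorem map_pow_eq_zero (hd : IsLeibniz 𝒜 d) {m : ℕ} {a : A} (ha : a ∈ 𝒜 m)
    (hda : d a = 0) {n : ℕ} (hn : n ≠ 0) : d (a ^ n) = 0 := by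
  obtain ⟨k, rfl⟩ := Nat.exists_eq_succ_of_ne_zero hn
  induction k with
  | zero => rwa [pow_one]
  | succ k ih => exact pow_succ' a (k + 1) ▸ map_mul_eq_zero hd ha hda (ih k.succ_ne_zero)

theorem map_mul_sub_mul (hd : IsLeibniz 𝒜 d) {m n : ℕ} {a b c e : A} (ha : a ∈ 𝒜 m)
    (hc : c ∈ 𝒜 n) (hn : Even n) (hdb : d b = 0) (hdc : d c = 0) :
    d (a * b - c * e) = d a * b - c * d e := by
  rw [map_sub, hd m a ha, hdb, mul_zero, smul_zero, add_zero,
    map_mul_of_map_eq_zero hd hc hdc, hn.neg_one_pow, one_smul]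

end GradedDerivation

open GradedDerivation in
theorem stmt4_general {A : Type*} [Ring A] [Algebra ℚ A]
    (𝒜 : ℕ → Submodule ℚ A)
    (hmul : ∀ m n : ℕ, ∀ a ∈ 𝒜 m, ∀ b ∈ 𝒜 n, a * b ∈ 𝒜 (m + n))
    (d : A →ₗ[ℚ] A)
    (hLeib : ∀ m : ℕ, ∀ a ∈ 𝒜 m, ∀ b : A, d (a * b) = d a * b + ((-1 : ℚ) ^ m) • (a * d b))
    (x1 x2 y1 y2 y3 : A)
    (hx1 : x1 ∈ 𝒜 18) (hx2 : x2 ∈ 𝒜 22)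
    (hy1 : y1 ∈ 𝒜 75) (hy2 : y2 ∈ 𝒜 79)
    (hdx1 : d x1 = 0) (hdx2 : d x2 = 0)
    (hdy1 : d y1 = x1 ^ 3 * x2) (hdy2 : d y2 = x1 ^ 2 * x2 ^ 2) (hdy3 : d y3 = x1 * x2 ^ 3) :
    d ((y1 * x2 - x1 * y2) * (y2 * x2 - x1 * y3) + x1 ^ 11 + x2 ^ 9) = 0 := by
  have hx1_even : Even 18 := ⟨9, rfl⟩
  have hu : y1 * x2 - x1 * y2 ∈ 𝒜 97 := sub_mem (hmul 75 22 y1 hy1 x2 hx2) (hmul 18 79 x1 hx1 y2 hy2)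
  have hdu : d (y1 * x2 - x1 * y2) = 0 := by
    rw [map_mul_sub_mul hLeib hy1 hx1 hx1_even hdx2 hdx1, hdy1, hdy2]
    simp only [pow_succ, pow_zero, one_mul, mul_assoc, sub_self]
  have hdv : d (y2 * x2 - x1 * y3) = 0 := by
    rw [map_mul_sub_mul hLeib hy2 hx1 hx1_even hdx2 hdx1, hdy2, hdy3]
    simp only [pow_succ, pow_zero, one_mul, mul_assoc, sub_self]
  rw [map_add, map_add, map_mul_eq_zero hLeib hu hdu hdv,
    map_pow_eq_zero hLeib hx1 hdx1 (by norm_num), map_pow_eq_zero hLeib hx2 hdx2 (by norm_num)]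
  simp only [add_zero]

/-- Example 5.1 of Arkowitz–Lupton: the prospective value of `d z` is a cocycle, i.e. `d² = 0`
holds on `z`.  We work in a graded-commutative `ℚ`-algebra with grading `𝒜`, where `d` is a
degree `+1` derivation (graded Leibniz rule). -/
theorem stmt4 {A : Type*} [Ring A] [Algebra ℚ A]
    (𝒜 : ℕ → Submodule ℚ A)
    (hmul : ∀ m n : ℕ, ∀ a ∈ 𝒜 m, ∀ b ∈ 𝒜 n, a * b ∈ 𝒜 (m + n))
    (hcomm : ∀ m n : ℕ, ∀ a ∈ 𝒜 m, ∀ b ∈ 𝒜 n, a * b = ((-1 : ℚ) ^ (m * n)) • (b * a))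
    (d : A →ₗ[ℚ] A)
    (hdeg : ∀ n : ℕ, ∀ a ∈ 𝒜 n, d a ∈ 𝒜 (n + 1))
    (hLeib : ∀ m : ℕ, ∀ a ∈ 𝒜 m, ∀ b : A, d (a * b) = d a * b + ((-1 : ℚ) ^ m) • (a * d b))
    (x1 x2 y1 y2 y3 : A)
    (hx1 : x1 ∈ 𝒜 18) (hx2 : x2 ∈ 𝒜 22)
    (hy1 : y1 ∈ 𝒜 75) (hy2 : y2 ∈ 𝒜 79) (hy3 : y3 ∈ 𝒜 83)
    (hdx1 : d x1 = 0) (hdx2 : d x2 = 0)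
    (hdy1 : d y1 = x1 ^ 3 * x2) (hdy2 : d y2 = x1 ^ 2 * x2 ^ 2) (hdy3 : d y3 = x1 * x2 ^ 3) :
    d ((y1 * x2 - x1 * y2) * (y2 * x2 - x1 * y3) + x1 ^ 11 + x2 ^ 9) = 0 :=
  stmt4_general 𝒜 hmul d hLeib x1 x2 y1 y2 y3 hx1 hx2 hy1 hy2 hdx1 hdx2 hdy1 hdy2 hdy3
end

section
/- In the minimal algebra of Example 5.2, d(z·x2 − y1·y2·y3·x1^3 − y1·x1^12) = x2^13, hence the cohomology class of x2 is nilpotent. -/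
/-!
The generators `x1`, `x2` have even degree, so they commute with every homogeneous element and
can be moved freely past the `y`'s. Expanding by the Leibniz rule, `d(y1·y2·y3·x1³)` cancels the
three mixed terms of `d(z)·x2`, and `d(y1·x1¹²) = x1¹⁵·x2` cancels `x1¹⁵·x2`, leaving `x2¹³`.
-/

section GradedDerivation

variable {A : Type*} [Ring A] [Algebra ℚ A] {𝒜 : ℕ → Submodule ℚ A}

theorem commute_of_mem_of_even
    (hcomm : ∀ m n : ℕ, ∀ a ∈ 𝒜 m, ∀ b ∈ 𝒜 n, a * b = ((-1 : ℚ) ^ (m * n)) • (b * a))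
    {m n : ℕ} (hm : Even m) {a b : A} (ha : a ∈ 𝒜 m) (hb : b ∈ 𝒜 n) : Commute a b := by
  rw [Commute, SemiconjBy, hcomm m n a ha b hb, (hm.mul_right n).neg_one_pow, one_smul]

variable {d : A →ₗ[ℚ] A}

theorem map_mul_of_map_eq_zero_right
    (hLeib : ∀ m : ℕ, ∀ a ∈ 𝒜 m, ∀ b : A, d (a * b) = d a * b + ((-1 : ℚ) ^ m) • (a * d b))
    {m : ℕ} {a b : A} (ha : a ∈ 𝒜 m) (hb : d b = 0) : d (a * b) = d a * b := by
  rw [hLeib m a ha b, hb, mul_zero, smul_zero, add_zero]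

theorem map_mul_of_even
    (hLeib : ∀ m : ℕ, ∀ a ∈ 𝒜 m, ∀ b : A, d (a * b) = d a * b + ((-1 : ℚ) ^ m) • (a * d b))
    {m : ℕ} (hm : Even m) {a : A} (ha : a ∈ 𝒜 m) (b : A) : d (a * b) = d a * b + a * d b := by
  rw [hLeib m a ha b, hm.neg_one_pow, one_smul]

theorem map_mul_of_odd
    (hLeib : ∀ m : ℕ, ∀ a ∈ 𝒜 m, ∀ b : A, d (a * b) = d a * b + ((-1 : ℚ) ^ m) • (a * d b))
    {m : ℕ} (hm : Odd m) {a : A} (ha : a ∈ 𝒜 m) (b : A) : d (a * b) = d a * b - a * d b := by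
  rw [hLeib m a ha b, hm.neg_one_pow, neg_one_smul, sub_eq_add_neg]

theorem map_pow_succ_eq_zero
    (hLeib : ∀ m : ℕ, ∀ a ∈ 𝒜 m, ∀ b : A, d (a * b) = d a * b + ((-1 : ℚ) ^ m) • (a * d b))
    {m : ℕ} {a : A} (ha : a ∈ 𝒜 m) (hda : d a = 0) (n : ℕ) : d (a ^ (n + 1)) = 0 := by
  induction n with
  | zero => rwa [pow_one]
  | succ n ih => rw [pow_succ', hLeib m a ha, hda, ih, zero_mul, mul_zero, smul_zero, add_zero]

end GradedDerivation

theorem coboundary_identity {R : Type*} [Ring R] {x1 x2 y1 y2 y3 : R} (h12 : Commute x1 x2)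
    (h1y2 : Commute x1 y2) (h1y3 : Commute x1 y3) (h2y2 : Commute x2 y2) (h2y3 : Commute x2 y3) :
    (y1 * y2 * x1 ^ 4 * x2 ^ 2 - y1 * y3 * x1 ^ 5 * x2 + y2 * y3 * x1 ^ 6 + x1 ^ 15 + x2 ^ 12) * x2
      - ((x1 ^ 3 * x2 * y2 - y1 * (x1 ^ 2 * x2 ^ 2)) * y3 + y1 * y2 * (x1 * x2 ^ 3)) * x1 ^ 3
      - x1 ^ 3 * x2 * x1 ^ 12 = x2 ^ 13 := by
  simp only [pow_succ, pow_zero, one_mul, sub_mul, add_mul, mul_assoc, h12.symm.eq,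
    h12.symm.left_comm, h2y2.eq, h2y3.eq, h1y2.left_comm, h1y3.left_comm, h2y3.left_comm]
  abel

theorem stmt6_general {A : Type*} [Ring A] [Algebra ℚ A]
    (𝒜 : ℕ → Submodule ℚ A)
    (hmul : ∀ m n : ℕ, ∀ a ∈ 𝒜 m, ∀ b ∈ 𝒜 n, a * b ∈ 𝒜 (m + n))
    (hcomm : ∀ m n : ℕ, ∀ a ∈ 𝒜 m, ∀ b ∈ 𝒜 n, a * b = ((-1 : ℚ) ^ (m * n)) • (b * a))
    (d : A →ₗ[ℚ] A)
    (hLeib : ∀ m : ℕ, ∀ a ∈ 𝒜 m, ∀ b : A, d (a * b) = d a * b + ((-1 : ℚ) ^ m) • (a * d b))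
    (x1 x2 y1 y2 y3 z : A)
    (hx1 : x1 ∈ 𝒜 8) (hx2 : x2 ∈ 𝒜 10)
    (hy1 : y1 ∈ 𝒜 33) (hy2 : y2 ∈ 𝒜 35) (hy3 : y3 ∈ 𝒜 37) (hz : z ∈ 𝒜 119)
    (hdx1 : d x1 = 0) (hdx2 : d x2 = 0)
    (hdy1 : d y1 = x1 ^ 3 * x2) (hdy2 : d y2 = x1 ^ 2 * x2 ^ 2) (hdy3 : d y3 = x1 * x2 ^ 3)
    (hdz : d z = y1 * y2 * x1 ^ 4 * x2 ^ 2 - y1 * y3 * x1 ^ 5 * x2 + y2 * y3 * x1 ^ 6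
        + x1 ^ 15 + x2 ^ 12) :
    d (z * x2 - y1 * y2 * y3 * x1 ^ 3 - y1 * x1 ^ 12) = x2 ^ 13 ∧
      ∃ (n : ℕ) (u : A), 0 < n ∧ x2 ^ n = d u := by
  have hy12 : y1 * y2 ∈ 𝒜 68 := hmul 33 35 y1 hy1 y2 hy2
  have hy123 : y1 * y2 * y3 ∈ 𝒜 105 := hmul 68 37 _ hy12 y3 hy3
  have hd_y12 : d (y1 * y2) = d y1 * y2 - y1 * d y2 := map_mul_of_odd hLeib (by decide) hy1 y2
  have hd_y123 : d (y1 * y2 * y3) = d (y1 * y2) * y3 + y1 * y2 * d y3 :=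
    map_mul_of_even hLeib (by decide) hy12 y3
  have hcoboundary : d (z * x2 - y1 * y2 * y3 * x1 ^ 3 - y1 * x1 ^ 12) = x2 ^ 13 := by
    rw [map_sub, map_sub, map_mul_of_map_eq_zero_right hLeib hz hdx2,
      map_mul_of_map_eq_zero_right hLeib hy123 (map_pow_succ_eq_zero hLeib hx1 hdx1 2),
      map_mul_of_map_eq_zero_right hLeib hy1 (map_pow_succ_eq_zero hLeib hx1 hdx1 11),
      hd_y123, hd_y12, hdz, hdy1, hdy2, hdy3]
    have h8 : Even 8 := by decide
    have h10 : Even 10 := by decide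
    exact coboundary_identity (commute_of_mem_of_even hcomm h8 hx1 hx2)
      (commute_of_mem_of_even hcomm h8 hx1 hy2) (commute_of_mem_of_even hcomm h8 hx1 hy3)
      (commute_of_mem_of_even hcomm h10 hx2 hy2) (commute_of_mem_of_even hcomm h10 hx2 hy3)
  exact ⟨hcoboundary, 13, _, by norm_num, hcoboundary.symm⟩

/-- Example 5.2 of Arkowitz–Lupton: `d(z·x2 − y1·y2·y3·x1³ − y1·x1¹²) = x2¹³`, hence the
cohomology class of `x2` is nilpotent (a power of `x2` is a coboundary). -/
theorem stmt6 {A : Type*} [Ring A] [Algebra ℚ A]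
    (𝒜 : ℕ → Submodule ℚ A)
    (hmul : ∀ m n : ℕ, ∀ a ∈ 𝒜 m, ∀ b ∈ 𝒜 n, a * b ∈ 𝒜 (m + n))
    (hcomm : ∀ m n : ℕ, ∀ a ∈ 𝒜 m, ∀ b ∈ 𝒜 n, a * b = ((-1 : ℚ) ^ (m * n)) • (b * a))
    (d : A →ₗ[ℚ] A)
    (hdeg : ∀ n : ℕ, ∀ a ∈ 𝒜 n, d a ∈ 𝒜 (n + 1))
    (hLeib : ∀ m : ℕ, ∀ a ∈ 𝒜 m, ∀ b : A, d (a * b) = d a * b + ((-1 : ℚ) ^ m) • (a * d b))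
    (x1 x2 y1 y2 y3 z : A)
    (hx1 : x1 ∈ 𝒜 8) (hx2 : x2 ∈ 𝒜 10)
    (hy1 : y1 ∈ 𝒜 33) (hy2 : y2 ∈ 𝒜 35) (hy3 : y3 ∈ 𝒜 37) (hz : z ∈ 𝒜 119)
    (hdx1 : d x1 = 0) (hdx2 : d x2 = 0)
    (hdy1 : d y1 = x1 ^ 3 * x2) (hdy2 : d y2 = x1 ^ 2 * x2 ^ 2) (hdy3 : d y3 = x1 * x2 ^ 3)
    (hdz : d z = y1 * y2 * x1 ^ 4 * x2 ^ 2 - y1 * y3 * x1 ^ 5 * x2 + y2 * y3 * x1 ^ 6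
        + x1 ^ 15 + x2 ^ 12) :
    d (z * x2 - y1 * y2 * y3 * x1 ^ 3 - y1 * x1 ^ 12) = x2 ^ 13 ∧
      ∃ (n : ℕ) (u : A), 0 < n ∧ x2 ^ n = d u :=
  stmt6_general 𝒜 hmul hcomm d hLeib x1 x2 y1 y2 y3 z hx1 hx2 hy1 hy2 hy3 hz hdx1 hdx2 hdy1 hdy2
    hdy3 hdz
end

section
/- Let M = ΛV be a connected free graded-commutative DG algebra over ℚ whose underlying vector space of generators V carries a second (weight) grading V = ⊕_i V_i making (M, d) a bigraded DG algebra with all generators of positive total degree plus weight (totally positive). Then for each nonzero rational λ there is a DG algebra automorphism φ_λ of M with φ_λ(v) = λ^{|v|+i}·v for v ∈ V_i, and for each cohomology class x of cohomological degree n and weight i, φ_λ^*(x) = λ^{n+i}·x. -/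
/-!
`φ_λ` is the scaling of the bigrading by `λ^(n+i)` on the component of bidegree `(n, i)`.
It is multiplicative because the total degree `n + i` is additive, it is invertible with
inverse `φ_{λ⁻¹}`, and it commutes with `d` because `d` has bidegree `(1, -1)`, which preserves
`n + i`. Since `φ_λ` already acts by `λ^(n+i)` on homogeneous cocycles, the statement on
cohomology holds on the nose.
-/

namespace DirectSum.IsInternal

variable {ι R M : Type*} [DecidableEq ι] [CommSemiring R] [AddCommMonoid M] [Module R M]
  {𝒜 : ι → Submodule R M} (h : IsInternal 𝒜)

include h in
theorem linearMap_ext {N : Type*} [AddCommMonoid N] [Module R N] {f g : M →ₗ[R] N}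
    (hfg : ∀ p, ∀ a ∈ 𝒜 p, f a = g a) : f = g :=
  (LinearMap.cancel_right h.surjective).mp <|
    DirectSum.linearMap_ext R (ψ := f ∘ₗ coeLinearMap 𝒜) (ψ' := g ∘ₗ coeLinearMap 𝒜) fun p =>
      LinearMap.ext fun x => by simpa using hfg p x x.2

noncomputable def scale (c : ι → R) : M →ₗ[R] M :=
  toModule R ι M (fun p => c p • (𝒜 p).subtype) ∘ₗ
    (LinearEquiv.ofBijective (coeLinearMap 𝒜) h).symm.toLinearMap

theorem scale_of_mem {c : ι → R} {p : ι} {a : M} (ha : a ∈ 𝒜 p) : h.scale c a = c p • a := by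
  have hdecomp : (LinearEquiv.ofBijective (coeLinearMap 𝒜) h).symm a = lof R ι _ p ⟨a, ha⟩ := by
    rw [LinearEquiv.symm_apply_eq]
    exact (coeLinearMap_lof 𝒜 p ⟨a, ha⟩).symm
  simp [scale, hdecomp, toModule_lof]

theorem scale_comp_scale (c c' : ι → R) : h.scale c ∘ₗ h.scale c' = h.scale (c * c') :=
  h.linearMap_ext fun p a ha => by
    simp [h.scale_of_mem ha, h.scale_of_mem (Submodule.smul_mem _ _ ha), mul_smul]

theorem scale_one : h.scale 1 = LinearMap.id :=
  h.linearMap_ext fun p a ha => by simp [h.scale_of_mem ha]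

theorem bijective_scale {c : ι → R} (hc : ∀ p, IsUnit (c p)) : Function.Bijective (h.scale c) := by
  have hinv : c * (fun p => Ring.inverse (c p)) = 1 :=
    funext fun p => Ring.mul_inverse_cancel _ (hc p)
  have hinv' : (fun p => Ring.inverse (c p)) * c = 1 := by rw [mul_comm, hinv]
  refine Function.bijective_iff_has_inverse.mpr
    ⟨h.scale fun p => Ring.inverse (c p), fun a => ?_, fun a => ?_⟩
  · change (h.scale _ ∘ₗ h.scale c) a = a
    rw [h.scale_comp_scale, hinv', h.scale_one, LinearMap.id_apply]
  · change (h.scale c ∘ₗ h.scale _) a = a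
    rw [h.scale_comp_scale, hinv, h.scale_one, LinearMap.id_apply]

theorem commute_scale {c : ι → R} {f : Module.End R M} {σ : ι → ι}
    (hf : ∀ p, ∀ a ∈ 𝒜 p, f a ∈ 𝒜 (σ p)) (hc : ∀ p, c (σ p) = c p) :
    Commute f (h.scale c) :=
  h.linearMap_ext fun p a ha => by
    simp [h.scale_of_mem ha, h.scale_of_mem (hf p a ha), hc]

section Algebra

variable [AddMonoid ι] {A : Type*} [Semiring A] [Algebra R A] {𝒜 : ι → Submodule R A}
  [SetLike.GradedMonoid 𝒜] (h : IsInternal 𝒜) {c : ι → R}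

theorem scale_apply_one (hc0 : c 0 = 1) : h.scale c 1 = 1 := by
  rw [h.scale_of_mem SetLike.GradedOne.one_mem, hc0, one_smul]

theorem scale_mul (hcadd : ∀ p q, c (p + q) = c p * c q) (a b : A) :
    h.scale c (a * b) = h.scale c a * h.scale c b := by
  have hhom : ∀ p, ∀ a ∈ 𝒜 p, ∀ b, h.scale c (a * b) = h.scale c a * h.scale c b := by
    intro p a ha b
    have hleft : h.scale c ∘ₗ LinearMap.mulLeft R a =
        LinearMap.mulLeft R (h.scale c a) ∘ₗ h.scale c :=
      h.linearMap_ext fun q b hb => by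
        simp [h.scale_of_mem ha, h.scale_of_mem hb, h.scale_of_mem (SetLike.mul_mem_graded ha hb),
          hcadd, mul_smul, smul_comm (c p)]
    exact LinearMap.congr_fun hleft b
  have hright : h.scale c ∘ₗ LinearMap.mulRight R b =
      LinearMap.mulRight R (h.scale c b) ∘ₗ h.scale c :=
    h.linearMap_ext fun p a ha => by simp [hhom p a ha]
  exact LinearMap.congr_fun hright a

noncomputable def scaleAlgHom (hc0 : c 0 = 1) (hcadd : ∀ p q, c (p + q) = c p * c q) :
    A →ₐ[R] A :=
  AlgHom.ofLinearMap (h.scale c) (h.scale_apply_one hc0) (h.scale_mul hcadd)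

@[simp]
theorem coe_scaleAlgHom (hc0 : c 0 = 1) (hcadd : ∀ p q, c (p + q) = c p * c q) :
    ⇑(h.scaleAlgHom hc0 hcadd) = h.scale c :=
  rfl

end Algebra

end DirectSum.IsInternal

theorem stmt7_general {A : Type*} [Ring A] [Algebra ℚ A]
    (𝒜 : ℤ → ℤ → Submodule ℚ A)
    (hinternal : DirectSum.IsInternal (fun p : ℤ × ℤ => 𝒜 p.1 p.2))
    (hone : (1 : A) ∈ 𝒜 0 0)
    (hmul : ∀ n i m j : ℤ, ∀ a ∈ 𝒜 n i, ∀ b ∈ 𝒜 m j, a * b ∈ 𝒜 (n + m) (i + j))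
    (d : A →ₗ[ℚ] A)
    (hd : ∀ n i : ℤ, ∀ a ∈ 𝒜 n i, d a ∈ 𝒜 (n + 1) (i - 1))
    (l : ℚ) (hl : l ≠ 0) :
    ∃ φ : A →ₐ[ℚ] A, Function.Bijective φ ∧ (∀ a : A, φ (d a) = d (φ a)) ∧
      (∀ n i : ℤ, ∀ a ∈ 𝒜 n i, φ a = l ^ (n + i) • a) ∧
      (∀ n i : ℤ, ∀ a ∈ 𝒜 n i, d a = 0 → ∃ b : A, φ a - l ^ (n + i) • a = d b) := by
  have : SetLike.GradedMonoid (fun p : ℤ × ℤ => 𝒜 p.1 p.2) :=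
    { one_mem := hone, mul_mem := fun p q a b ha hb => hmul _ _ _ _ a ha b hb }
  let c : ℤ × ℤ → ℚ := fun p => l ^ (p.1 + p.2)
  have hcadd : ∀ p q, c (p + q) = c p * c q := fun p q => by
    simp only [c, Prod.fst_add, Prod.snd_add, ← zpow_add₀ hl]; ring_nf
  have hscale : ∀ n i, ∀ a ∈ 𝒜 n i, hinternal.scale c a = l ^ (n + i) • a :=
    fun n i a ha => hinternal.scale_of_mem (p := (n, i)) ha
  have hdc : Commute d (hinternal.scale c) :=
    hinternal.commute_scale (σ := fun p => (p.1 + 1, p.2 - 1)) (fun p a ha => hd _ _ a ha)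
      fun p => by simp only [c]; ring_nf
  refine ⟨hinternal.scaleAlgHom (by simp [c]) hcadd,
    hinternal.bijective_scale fun p => (zpow_ne_zero _ hl).isUnit,
    fun a => (LinearMap.congr_fun hdc a).symm, by simpa using hscale,
    fun n i a ha _ => ⟨0, ?_⟩⟩
  simp [hscale n i a ha]

/-- Lemma 4.5 of Arkowitz–Lupton: a totally positive bigraded DG algebra (here an abstract
`ℚ`-algebra `A` with bigrading `𝒜 n i`, `n` the cohomological degree and `i` the weight/second
degree, `d` of bidegree `(+1, −1)`) admits, for each `λ ≠ 0` in `ℚ`, a DG algebra automorphism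
`φ_λ` with `φ_λ(v) = λ^{n+i} • v` on `𝒜 n i`; on cohomology, `φ_λ^*` multiplies a class of
degree `n` and weight `i` by `λ^{n+i}`. -/
theorem stmt7 {A : Type*} [Ring A] [Algebra ℚ A]
    (𝒜 : ℤ → ℤ → Submodule ℚ A)
    (hinternal : DirectSum.IsInternal (fun p : ℤ × ℤ => 𝒜 p.1 p.2))
    (hone : (1 : A) ∈ 𝒜 0 0)
    (hmul : ∀ n i m j : ℤ, ∀ a ∈ 𝒜 n i, ∀ b ∈ 𝒜 m j, a * b ∈ 𝒜 (n + m) (i + j))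
    (d : A →ₗ[ℚ] A)
    (hd : ∀ n i : ℤ, ∀ a ∈ 𝒜 n i, d a ∈ 𝒜 (n + 1) (i - 1))
    (htotpos : ∀ n i : ℤ, 𝒜 n i ≠ ⊥ → 0 < n + i ∨ (n = 0 ∧ i = 0))
    (l : ℚ) (hl : l ≠ 0) :
    ∃ φ : A →ₐ[ℚ] A, Function.Bijective φ ∧ (∀ a : A, φ (d a) = d (φ a)) ∧
      (∀ n i : ℤ, ∀ a ∈ 𝒜 n i, φ a = l ^ (n + i) • a) ∧
      (∀ n i : ℤ, ∀ a ∈ 𝒜 n i, d a = 0 → ∃ b : A, φ a - l ^ (n + i) • a = d b) :=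
  stmt7_general 𝒜 hinternal hone hmul d hd l hl
end

section
/- Suppose f, g : M → N are DG algebra maps from a free graded-commutative DG algebra M = ΛV to a DG algebra N, H : ΛV_0^I → N is a homotopy from f|ΛV_0 to g|ΛV_0 (where V = V_0 ⊕ V_1 is an obstruction decomposition, i.e., d(V) ⊆ ΛV_0), and w ∈ V_1. Then the element f(w) + H(α(w) − w − ŵ) − g(w) of N is a cocycle. -/
theorem stmt14_general {I N : Type*} [Ring I] [Algebra ℚ I] [Ring N] [Algebra ℚ N]
    (dI : I →ₗ[ℚ] I) (dN : N →ₗ[ℚ] N)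
    (f g H : I →ₐ[ℚ] N) (α : I →ₐ[ℚ] I)
    (hf : ∀ x : I, f (dI x) = dN (f x))
    (hg : ∀ x : I, g (dI x) = dN (g x))
    (hH : ∀ x : I, H (dI x) = dN (H x))
    (hα : ∀ x : I, α (dI x) = dI (α x))
    (M0 : Subalgebra ℚ I)
    (hHf : ∀ x ∈ M0, H x = f x)
    (hHg : ∀ x ∈ M0, H (α x) = g x)
    (w what : I) (hdw : dI w ∈ M0) (hwhat : dI what = 0) :
    dN (f w + H (α w - w - what) - g w) = 0 := by
  have hd_correction : dN (H (α w - w - what)) = g (dI w) - f (dI w) := by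
    rw [← hH, map_sub, hwhat, sub_zero, map_sub, ← hα, map_sub, hHg _ hdw, hHf _ hdw]
  rw [map_sub, map_add, ← hf, ← hg, hd_correction]
  abel

/-- The obstruction cocycle is well-defined (Definition 2.4 of Arkowitz–Lupton).  We work
inside the cylinder `I = ΛV^I`: `dI` is its differential, `α` the exponential DG automorphism,
`M0` the subalgebra `ΛV_0`, `f, g, H` DG algebra maps to `N` with `H` a homotopy from `f` to `g`
on `ΛV_0` (i.e. `H = f` and `H∘α = g` on `M0`).  If `w ∈ V_1` has `dI w ∈ ΛV_0` (obstruction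
decomposition) and `what = ŵ` is a cocycle, then `f(w) + H(α(w) − w − ŵ) − g(w)` is a cocycle
of `N`. -/
theorem stmt14 {I N : Type*} [Ring I] [Algebra ℚ I] [Ring N] [Algebra ℚ N]
    (dI : I →ₗ[ℚ] I) (dN : N →ₗ[ℚ] N)
    (hdI : ∀ x : I, dI (dI x) = 0) (hdN : ∀ x : N, dN (dN x) = 0)
    (f g H : I →ₐ[ℚ] N) (α : I →ₐ[ℚ] I)
    (hf : ∀ x : I, f (dI x) = dN (f x))
    (hg : ∀ x : I, g (dI x) = dN (g x))
    (hH : ∀ x : I, H (dI x) = dN (H x))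
    (hα : ∀ x : I, α (dI x) = dI (α x))
    (M0 : Subalgebra ℚ I)
    (hHf : ∀ x ∈ M0, H x = f x)
    (hHg : ∀ x ∈ M0, H (α x) = g x)
    (w what : I) (hdw : dI w ∈ M0) (hwhat : dI what = 0) :
    dN (f w + H (α w - w - what) - g w) = 0 :=
  stmt14_general dI dN f g H α hf hg hH hα M0 hHf hHg w what hdw hwhat
end

section
/- Let a1, a2, c ∈ ℚ satisfy a1^15 = c, a2^12 = c, and c = a1^9·a2^5. Then either a1 = a2 = c = 0, or a1 = a2 = c = 1. -/
/-! Away from `a₁ = 0`, cancelling powers of `a₁` in `a₁¹⁵ = a₁⁹ a₂⁵` gives `a₁⁶ = a₂⁵`; squaring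
and cancelling against `a₁¹⁵ = a₂¹²` gives `a₁³ = a₂²`, hence `a₂⁵ = a₁⁶ = a₂⁴`, so `a₂ = 1` and
`a₁³ = 1`. Over an ordered ring an odd power determines its base, so `a₁ = 1`. -/

lemma eq_one_and_pow_three_eq_one_of_pow_fifteen_eq {M : Type*} [CommMonoidWithZero M]
    [IsCancelMulZero M] {a b : M} (ha : a ≠ 0) (h₁ : a ^ 15 = b ^ 12)
    (h₂ : a ^ 15 = a ^ 9 * b ^ 5) : b = 1 ∧ a ^ 3 = 1 := by
  have h6 : a ^ 6 = b ^ 5 := mul_left_cancel₀ (pow_ne_zero 9 ha) (by rw [← pow_add, ← h₂])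
  have hb : b ≠ 0 := by
    rintro rfl
    exact pow_ne_zero 6 ha (h6.trans (zero_pow (by norm_num)))
  have h3 : a ^ 3 = b ^ 2 := mul_left_cancel₀ (pow_ne_zero 12 ha) <| calc
    a ^ 12 * a ^ 3 = b ^ 12 := by rw [← pow_add, h₁]
    _ = (a ^ 6) ^ 2 * b ^ 2 := by rw [h6, ← pow_mul, ← pow_add]
    _ = a ^ 12 * b ^ 2 := by rw [← pow_mul]
  have hb1 : b = 1 := mul_left_cancel₀ (pow_ne_zero 4 hb) <| calc
    b ^ 4 * b = (a ^ 3) ^ 2 := by rw [← pow_succ, ← h6, ← pow_mul]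
    _ = b ^ 4 * 1 := by rw [h3, ← pow_mul, mul_one]
  exact ⟨hb1, by rw [h3, hb1, one_pow]⟩

lemma eq_one_of_pow_three_eq_one {R : Type*} [Ring R] [LinearOrder R] [IsStrictOrderedRing R]
    {a : R} (h : a ^ 3 = 1) : a = 1 :=
  (Odd.strictMono_pow (by decide : Odd 3)).injective (h.trans (one_pow 3).symm)

theorem stmt18 (a1 a2 c : ℚ) (h1 : a1^15 = c) (h2 : a2^12 = c) (h3 : c = a1^9 * a2^5) :
    (a1 = 0 ∧ a2 = 0 ∧ c = 0) ∨ (a1 = 1 ∧ a2 = 1 ∧ c = 1) := by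
  subst h1
  rcases eq_or_ne a1 0 with rfl | ha
  · left
    have hc : (0 : ℚ) ^ 15 = 0 := by norm_num
    exact ⟨rfl, pow_eq_zero_iff (by norm_num) |>.mp (h2.trans hc), hc⟩
  · right
    obtain ⟨rfl, ha3⟩ := eq_one_and_pow_three_eq_one_of_pow_fifteen_eq ha h2.symm h3
    obtain rfl := eq_one_of_pow_three_eq_one ha3
    exact ⟨rfl, rfl, one_pow 15⟩
end
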